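/- The sets MTL^𝓘[n] for n ∈ ℤ, where 𝓘[n] = {m ∈ ℤ : m ≤ n} ∪ {−∞,+∞}, form a strictly increasing chain under expressive power: if n₁ < n₂ then every MTL^𝓘[n₁]-definable language is MTL^𝓘[n₂]-definable, and there is a language definable in MTL^𝓘[n₂] but not in MTL^𝓘[n₁]. -/

import Mathlib

/-! An interval whose endpoints lie in `𝓘[n]` contains either every integer `> n` or none of
them. Hence the words whose data value changes by `d` from position `0` to position `1` and
is constant afterwards satisfy the same `MTL^𝓘[n₁]` formulas for all `d > n₁`, while the
`MTL^𝓘[n₂]` formula `p U_[n₂,n₂] p` (with `p` true everywhere) tells the jumps `n₂` and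
`n₂ + 1` apart. -/

/-- Integers extended with `-∞` (`⊥`) and `+∞` (`⊤`), used as interval endpoints. -/
abbrev ExtInt := WithBot (WithTop ℤ)

def ExtInt.ofInt (n : ℤ) : ExtInt := ((n : WithTop ℤ) : ExtInt)

/-- An interval of integers, given by two (possibly infinite) endpoints and
openness flags. -/
structure Iv where
  lo : ExtInt
  hi : ExtInt
  loOpen : Bool
  hiOpen : Bool

/-- Membership of an integer in an interval. -/
def Iv.mem (I : Iv) (d : ℤ) : Prop :=
  (if I.loOpen then I.lo < ExtInt.ofInt d else I.lo ≤ ExtInt.ofInt d) ∧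
  (if I.hiOpen then ExtInt.ofInt d < I.hi else ExtInt.ofInt d ≤ I.hi)

/-- The interval `(-∞, +∞)`. -/
def Iv.univ : Iv := ⟨⊥, ⊤, true, true⟩

/-- The singleton interval `[n, n]`. -/
def Iv.pt (n : ℤ) : Iv := ⟨ExtInt.ofInt n, ExtInt.ofInt n, false, false⟩

/-- A data word: an infinite sequence of pairs of a set of propositions and a
natural number data value. -/
abbrev DataWord (P : Type) := ℕ → (Set P) × ℕ

/-- Syntax of MTL: atoms, negation, conjunction, and interval-constrained
strict until. -/
inductive MTL (P : Type) where
  | atom : P → MTL P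
  | neg  : MTL P → MTL P
  | and  : MTL P → MTL P → MTL P
  | untl : MTL P → Iv → MTL P → MTL P

/-- Satisfaction of an MTL formula at position `i` of data word `w`. -/
def MTL.sat {P : Type} (w : DataWord P) : ℕ → MTL P → Prop
  | i, .atom p => p ∈ (w i).1
  | i, .neg φ => ¬ MTL.sat w i φ
  | i, .and φ ψ => MTL.sat w i φ ∧ MTL.sat w i ψ
  | i, .untl φ I ψ => ∃ j, i < j ∧ MTL.sat w j ψ ∧
      I.mem (((w j).2 : ℤ) - ((w i).2 : ℤ)) ∧
      ∀ k, i < k → k < j → MTL.sat w k φ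

/-- A data word satisfies an MTL formula if it holds at position `0`. -/
def MTL.models {P : Type} (w : DataWord P) (φ : MTL P) : Prop := MTL.sat w 0 φ

/-- The until rank of an MTL formula. -/
def MTL.urk {P : Type} : MTL P → ℕ
  | .atom _ => 0
  | .neg φ => φ.urk
  | .and φ ψ => max φ.urk ψ.urk
  | .untl φ _ ψ => max φ.urk ψ.urk + 1

/-- All interval endpoints of until operators in the formula lie in `S`. -/
def MTL.endpointsIn {P : Type} : MTL P → Set ExtInt → Prop
  | .atom _, _ => True
  | .neg φ, S => φ.endpointsIn S
  | .and φ ψ, S => φ.endpointsIn S ∧ ψ.endpointsIn S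
  | .untl φ I ψ, S => I.lo ∈ S ∧ I.hi ∈ S ∧ φ.endpointsIn S ∧ ψ.endpointsIn S

/-- The endpoint set `𝓘[n] = {m ∈ ℤ : m ≤ n} ∪ {-∞, +∞}`. -/
def Ichain (n : ℤ) : Set ExtInt :=
  {e | e = ⊥ ∨ e = ⊤ ∨ ∃ m : ℤ, m ≤ n ∧ e = ExtInt.ofInt m}

lemma ofInt_mem_Ichain {m n : ℤ} (h : m ≤ n) : ExtInt.ofInt m ∈ Ichain n :=
  Or.inr (Or.inr ⟨m, h, rfl⟩)

lemma Ichain_mono {n₁ n₂ : ℤ} (h : n₁ ≤ n₂) : Ichain n₁ ⊆ Ichain n₂ := by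
  rintro e (he | he | ⟨m, hm, rfl⟩)
  exacts [Or.inl he, Or.inr (Or.inl he), ofInt_mem_Ichain (hm.trans h)]

lemma Iv.mem_iff_of_lt {n d : ℤ} {I : Iv} (hlo : I.lo ∈ Ichain n) (hhi : I.hi ∈ Ichain n)
    (hd : n < d) : I.mem d ↔ I.lo ≠ ⊤ ∧ I.hi = ⊤ := by
  obtain ⟨lo, hi, loOpen, hiOpen⟩ := I
  have hd_lt_top : ((d : WithTop ℤ) : ExtInt) < ⊤ :=
    WithBot.coe_lt_coe.mpr (WithTop.coe_lt_top d)
  unfold Iv.mem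
  rcases hlo with rfl | rfl | ⟨a, ha, rfl⟩ <;> rcases hhi with rfl | rfl | ⟨b, hb, rfl⟩ <;>
    cases loOpen <;> cases hiOpen <;> simp [ExtInt.ofInt, hd_lt_top] <;> omega

lemma MTL.endpointsIn.mono {P : Type} {S T : Set ExtInt} {φ : MTL P} (hφ : φ.endpointsIn S)
    (hST : S ⊆ T) : φ.endpointsIn T := by
  induction φ with
  | atom => trivial
  | neg φ ih => exact ih hφ
  | and φ ψ ihφ ihψ => exact ⟨ihφ hφ.1, ihψ hφ.2⟩
  | untl φ I ψ ihφ ihψ => exact ⟨hST hφ.1, hST hφ.2.1, ihφ hφ.2.2.1, ihψ hφ.2.2.2⟩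

theorem MTL.sat_iff_sat_of_diff_mem_iff {P : Type} {S : Set ExtInt} {w w' : DataWord P}
    (hprop : ∀ i, (w i).1 = (w' i).1)
    (hdiff : ∀ I : Iv, I.lo ∈ S → I.hi ∈ S → ∀ i j, i < j →
      (I.mem ((w j).2 - (w i).2) ↔ I.mem ((w' j).2 - (w' i).2)))
    {φ : MTL P} (hφ : φ.endpointsIn S) (i : ℕ) : MTL.sat w i φ ↔ MTL.sat w' i φ := by
  induction φ generalizing i with
  | atom p => simp only [MTL.sat, hprop]
  | neg φ ih => exact not_congr (ih hφ i)
  | and φ ψ ihφ ihψ => exact and_congr (ihφ hφ.1 i) (ihψ hφ.2 i)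
  | untl φ I ψ ihφ ihψ =>
    obtain ⟨hlo, hhi, hφ, hψ⟩ := hφ
    refine exists_congr fun j => and_congr_right fun hij => ?_
    rw [ihψ hψ j, hdiff I hlo hhi i j hij]
    exact and_congr_right' (and_congr_right' (forall_congr' fun k =>
      imp_congr_right fun _ => imp_congr_right fun _ => ihφ hφ k))

/-- Data values are natural numbers, so the jump `d` at position `0` is realised as
`d.toNat - (-d).toNat`. -/
def stepWord (P : Type) (d : ℤ) : DataWord P :=
  fun i => (Set.univ, if i = 0 then (-d).toNat else d.toNat)

lemma stepWord_diff (P : Type) (d : ℤ) {i j : ℕ} (hij : i < j) :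
    ((stepWord P d j).2 - (stepWord P d i).2 : ℤ) = if i = 0 then d else 0 := by
  have hj : j ≠ 0 := (hij.trans_le' (Nat.zero_le i)).ne'
  split_ifs with hi
  · simp only [stepWord, hi, hj, if_true, if_false, Int.toNat_sub_toNat_neg]
  · simp only [stepWord, hi, hj, if_false, sub_self]

lemma sat_stepWord_iff_of_lt {P : Type} {n d d' : ℤ} (hd : n < d) (hd' : n < d') {φ : MTL P}
    (hφ : φ.endpointsIn (Ichain n)) (i : ℕ) :
    MTL.sat (stepWord P d) i φ ↔ MTL.sat (stepWord P d') i φ := by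
  refine MTL.sat_iff_sat_of_diff_mem_iff (w := stepWord P d) (w' := stepWord P d')
    (fun _ => rfl) (fun I hlo hhi i j hij => ?_) hφ i
  rw [stepWord_diff P d hij, stepWord_diff P d' hij]
  split_ifs
  · rw [Iv.mem_iff_of_lt hlo hhi hd, Iv.mem_iff_of_lt hlo hhi hd']
  · rfl

lemma Iv.mem_pt {n d : ℤ} : (Iv.pt n).mem d ↔ d = n := by
  simp only [Iv.mem, Iv.pt, ExtInt.ofInt, Bool.false_eq_true, if_false, WithBot.coe_le_coe,
    WithTop.coe_le_coe]
  exact ⟨fun h => le_antisymm h.2 h.1, fun h => ⟨h.ge, h.le⟩⟩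

lemma models_stepWord_untl_pt_iff {P : Type} (p : P) (n d : ℤ) :
    MTL.models (stepWord P d) (.untl (.atom p) (Iv.pt n) (.atom p)) ↔ d = n := by
  constructor
  · rintro ⟨j, hj, -, hmem, -⟩
    rwa [stepWord_diff P d hj, if_pos rfl, Iv.mem_pt] at hmem
  · rintro rfl
    refine ⟨1, one_pos, Set.mem_univ p, ?_, fun k hk₀ hk₁ => absurd hk₁ (by omega)⟩
    rw [stepWord_diff P d one_pos, if_pos rfl, Iv.mem_pt]

/-- The fragments `MTL^{𝓘[n]}` form a strictly increasing chain in expressive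
power. -/
theorem mtl_linear_constraint_hierarchy (P : Type) [Inhabited P]
    (n₁ n₂ : ℤ) (h : n₁ < n₂) :
    (∀ φ : MTL P, MTL.endpointsIn φ (Ichain n₁) →
        ∃ ψ : MTL P, MTL.endpointsIn ψ (Ichain n₂) ∧
          ∀ w : DataWord P, MTL.models w φ ↔ MTL.models w ψ) ∧
    (∃ ψ : MTL P, MTL.endpointsIn ψ (Ichain n₂) ∧
        ¬ ∃ φ : MTL P, MTL.endpointsIn φ (Ichain n₁) ∧
          ∀ w : DataWord P, MTL.models w φ ↔ MTL.models w ψ) := by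
  refine ⟨fun φ hφ => ⟨φ, hφ.mono (Ichain_mono h.le), fun _ => Iff.rfl⟩, ?_⟩
  refine ⟨.untl (.atom default) (Iv.pt n₂) (.atom default),
    ⟨ofInt_mem_Ichain le_rfl, ofInt_mem_Ichain le_rfl, trivial, trivial⟩, ?_⟩
  rintro ⟨φ, hφ, hequiv⟩
  have hjump : MTL.models (stepWord P n₂) φ ↔ MTL.models (stepWord P (n₂ + 1)) φ :=
    sat_stepWord_iff_of_lt h (h.trans (lt_add_one n₂)) hφ 0
  have hsep := (models_stepWord_untl_pt_iff (default : P) n₂ n₂).mpr rfl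
  rw [← hequiv, hjump, hequiv, models_stepWord_untl_pt_iff] at hsep
  exact (lt_add_one n₂).ne' hsep
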